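/- The coproduct Δ on H is coassociative and cocommutative, ε is a counit for Δ, and both Δ and ε are homomorphisms of unital ℚ-algebras (where H⊗H carries the product induced by the Hall product). Hence (H, ×, δ_∅, Δ, ε) is a cocommutative bialgebra over ℚ. -/

import Mathlib

open scoped Classical

/-- Concrete (labeled) rooted trees: a root with a list of subtrees. -/
inductive RTree : Type
  | node : List RTree → RTree

/-- Shapes of admissible cuts: at each tree, either the full cut
(everything, including the root, goes to the pruned part `P`), or a choice of
an admissible cut of each child subtree.  A `full` occurring strictly inside
corresponds to cutting the edge above that vertex. -/
inductive CutShape : Type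
  | full
  | branch : List CutShape → CutShape

namespace CK

/-- Number of vertices of a forest. -/
def sizeL : List RTree → ℕ
  | [] => 0
  | .node l :: ts => 1 + sizeL l + sizeL ts

/-- All admissible cuts of a forest (a choice of admissible cut of each tree). -/
def cutsF : List RTree → List (List CutShape)
  | [] => [[]]
  | .node l :: ts =>
      (CutShape.full :: (cutsF l).map CutShape.branch).flatMap
        fun c => (cutsF ts).map (c :: ·)

/-- The root part `R_C(F)` of a cut. -/
def Rcut : List RTree → List CutShape → List RTree
  | [], _ => []
  | _ :: _, [] => []
  | .node _ :: ts, .full :: cs => Rcut ts cs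
  | .node l :: ts, .branch ds :: cs => RTree.node (Rcut l ds) :: Rcut ts cs

/-- The pruned part `P_C(F)` of a cut. -/
def Pcut : List RTree → List CutShape → List RTree
  | [], _ => []
  | _ :: _, [] => []
  | .node l :: ts, .full :: cs => RTree.node l :: Pcut ts cs
  | .node l :: ts, .branch ds :: cs => Pcut l ds ++ Pcut ts cs

/-- Number of `full`s occurring in a cut. -/
def fullsL : List CutShape → ℕ
  | [] => 0
  | .full :: cs => 1 + fullsL cs
  | .branch ds :: cs => fullsL ds + fullsL cs

/-- A list of concrete forests containing (representatives of) every forest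
with at most `n` vertices. -/
def forestsUpTo : ℕ → List (List RTree)
  | 0 => [[]]
  | n+1 => [] :: (forestsUpTo n).flatMap fun l => (forestsUpTo n).map fun F => RTree.node l :: F

/-- Isomorphism of rooted trees (non-planar): a root-preserving bijection, i.e.
the lists of subtrees agree up to permutation and isomorphism. -/
inductive Iso : RTree → RTree → Prop
  | node {l₁ l l₂ : List RTree} : List.Forall₂ Iso l₁ l → l.Perm l₂ → Iso (.node l₁) (.node l₂)

/-- Isomorphism classes of rooted trees. -/
abbrev TreeClass : Type := Quot Iso

/-- Isomorphism classes of rooted forests = multisets of tree classes.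
The empty forest is `0`. -/
abbrev ForestClass : Type := Multiset TreeClass

/-- Isomorphism class of a tree. -/
def clT (t : RTree) : TreeClass := Quot.mk _ t

/-- Isomorphism class of a forest. -/
def clF (F : List RTree) : ForestClass := (F.map clT : List TreeClass)

/-- A concrete representative of a forest class. -/
noncomputable def repF (M : ForestClass) : List RTree := M.toList.map Quot.out

/-- A concrete representative of a tree class. -/
noncomputable def repT (T : TreeClass) : RTree := T.out

/-- Number of vertices of a forest class. -/
noncomputable def sizeC (M : ForestClass) : ℕ := sizeL (repF M)

/-- Number of vertices of a tree class. -/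
noncomputable def sizeT (T : TreeClass) : ℕ := sizeL [repT T]

/-- The Hall algebra `H`: finitely supported ℚ-valued functions on
isomorphism classes of rooted forests, with basis the delta functions. -/
abbrev H : Type := ForestClass →₀ ℚ

/-- The basis element `δ_A` of `H`. -/
noncomputable def delta (A : ForestClass) : H := Finsupp.single A 1

/-- `n(A,B;M)`: the number of admissible cuts `C` of `M` with
`P_C(M) ≅ A` and `R_C(M) ≅ B`. -/
noncomputable def nCuts (A B M : ForestClass) : ℕ :=
  (cutsF (repF M)).countP fun c =>
    decide (clF (Pcut (repF M) c) = A ∧ clF (Rcut (repF M) c) = B)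

/-- A finite set of forest classes containing all classes with at most `n`
vertices. -/
noncomputable def forestCand (n : ℕ) : Finset ForestClass :=
  ((forestsUpTo n).map clF).toFinset

/-- A finite set of tree classes containing all classes with at most `n+1`
vertices. -/
noncomputable def treeCand (n : ℕ) : Finset TreeClass :=
  ((forestsUpTo n).map fun F => clT (RTree.node F)).toFinset

/-- The Hall product on basis elements: `δ_A × δ_B = Σ_M n(A,B;M)·δ_M`
(every `M` with `n(A,B;M) ≠ 0` has exactly `sizeC A + sizeC B` vertices). -/
noncomputable def mulBasis (A B : ForestClass) : H :=
  ∑ M ∈ forestCand (sizeC A + sizeC B), (nCuts A B M : ℚ) • delta M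

/-- The Hall product on `H`, extended bilinearly from basis elements. -/
noncomputable def hmul (f g : H) : H :=
  f.sum fun A a => g.sum fun B b => (a * b) • mulBasis A B

/-- The Connes-Kreimer Lie algebra `n_T` (as a vector space): the span of
isomorphism classes of rooted trees. -/
abbrev nT : Type := TreeClass →₀ ℚ

/-- The basis element of `n_T` corresponding to a rooted tree `T`. -/
noncomputable def tau (T : TreeClass) : nT := Finsupp.single T 1

/-- `a(T₁,T₂;T)`: the number of edges `e` of `T` such that the single-edge cut
at `e` has pruned part `≅ T₁` and root part `≅ T₂`. -/
noncomputable def aCount (T₁ T₂ T : TreeClass) : ℕ :=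
  (cutsF [repT T]).countP fun c =>
    decide (fullsL c = 1 ∧ clF (Pcut [repT T] c) = ({T₁} : Multiset TreeClass)
      ∧ clF (Rcut [repT T] c) = ({T₂} : Multiset TreeClass))

/-- The grafting (pre-Lie) product on basis elements:
`T₁ * T₂ = Σ_T a(T₁,T₂;T)·T`. -/
noncomputable def graftBasis (T₁ T₂ : TreeClass) : nT :=
  ∑ T ∈ treeCand (sizeT T₁ + sizeT T₂), (aCount T₁ T₂ T : ℚ) • tau T

/-- The grafting (pre-Lie) product on `n_T`, extended bilinearly. -/
noncomputable def graft (x y : nT) : nT :=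
  x.sum fun T₁ a => y.sum fun T₂ b => (a * b) • graftBasis T₁ T₂

/-- The Connes-Kreimer bracket `[x,y] = x*y - y*x` on `n_T`. -/
noncomputable def ckBracket (x y : nT) : nT := graft x y - graft y x

/-- `Ẽ_A δ_B = Σ_C δ_{R_C(B)}`, the sum over admissible cuts `C` of `B` with
`P_C(B) ≅ A`. -/
noncomputable def elimBasis (A B : ForestClass) : H :=
  (((cutsF (repF B)).filter fun c => decide (clF (Pcut (repF B) c) = A)).map
    fun c => delta (clF (Rcut (repF B) c))).sum

/-- The elimination operator `E_A` (here on `H ≅ H*`, identifying `φ_B` with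
`δ_B`). -/
noncomputable def elim (A : ForestClass) : H →ₗ[ℚ] H :=
  Finsupp.lsum ℚ fun B => LinearMap.toSpanSingleton ℚ H (elimBasis A B)

/-- `Ẽ^top_A δ_B = Σ_C δ_{P_C(B)}`, the sum over admissible cuts `C` of `B`
with `R_C(B) ≅ A`. -/
noncomputable def topElimBasis (A B : ForestClass) : H :=
  (((cutsF (repF B)).filter fun c => decide (clF (Rcut (repF B) c) = A)).map
    fun c => delta (clF (Pcut (repF B) c))).sum

/-- The top-elimination operator `E^top_A`. -/
noncomputable def topElim (A : ForestClass) : H →ₗ[ℚ] H :=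
  Finsupp.lsum ℚ fun B => LinearMap.toSpanSingleton ℚ H (topElimBasis A B)

/-- `H ⊗ H`, realized as finitely supported functions on pairs of classes. -/
abbrev H2 : Type := (ForestClass × ForestClass) →₀ ℚ

/-- `Δ(δ_M) = Σ δ_A ⊗ δ_B`, the sum over ordered pairs `(A,B)` of classes with
`A ⊔ B ≅ M`. -/
noncomputable def deltaBasis (M : ForestClass) : H2 :=
  ∑ A ∈ M.powerset.toFinset, Finsupp.single (A, M - A) 1

/-- The coproduct `Δ : H → H ⊗ H`. -/
noncomputable def coprod : H →ₗ[ℚ] H2 :=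
  Finsupp.lsum ℚ fun M => LinearMap.toSpanSingleton ℚ H2 (deltaBasis M)

/-- `H ⊗ H ⊗ H`, realized as finitely supported functions on triples. -/
abbrev H3 : Type := (ForestClass × ForestClass × ForestClass) →₀ ℚ

/-- The product on `H ⊗ H` induced by the Hall product:
`(δ_{A₁}⊗δ_{A₂})·(δ_{B₁}⊗δ_{B₂}) = (δ_{A₁}×δ_{B₁}) ⊗ (δ_{A₂}×δ_{B₂})`. -/
noncomputable def mulBasis2 (A B : ForestClass × ForestClass) : H2 :=
  ∑ M ∈ forestCand (sizeC A.1 + sizeC B.1), ∑ N ∈ forestCand (sizeC A.2 + sizeC B.2),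
    ((nCuts A.1 B.1 M : ℚ) * (nCuts A.2 B.2 N : ℚ)) • Finsupp.single (M, N) 1

/-- The induced product on `H ⊗ H`, extended bilinearly. -/
noncomputable def hmul2 (f g : H2) : H2 :=
  f.sum fun A a => g.sum fun B b => (a * b) • mulBasis2 A B

/-- `Δ ⊗ id : H ⊗ H → H ⊗ H ⊗ H`. -/
noncomputable def coprodFst : H2 →ₗ[ℚ] H3 :=
  Finsupp.lsum ℚ fun p => LinearMap.toSpanSingleton ℚ H3
    (∑ A ∈ p.1.powerset.toFinset, Finsupp.single (A, p.1 - A, p.2) 1)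

/-- `id ⊗ Δ : H ⊗ H → H ⊗ H ⊗ H`. -/
noncomputable def coprodSnd : H2 →ₗ[ℚ] H3 :=
  Finsupp.lsum ℚ fun p => LinearMap.toSpanSingleton ℚ H3
    (∑ A ∈ p.2.powerset.toFinset, Finsupp.single (p.1, A, p.2 - A) 1)

/-- `ε ⊗ id : H ⊗ H → H`. -/
noncomputable def counitFst : H2 →ₗ[ℚ] H :=
  Finsupp.lsum ℚ fun p => LinearMap.toSpanSingleton ℚ H
    (if p.1 = 0 then delta p.2 else 0)

/-- `id ⊗ ε : H ⊗ H → H`. -/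
noncomputable def counitSnd : H2 →ₗ[ℚ] H :=
  Finsupp.lsum ℚ fun p => LinearMap.toSpanSingleton ℚ H
    (if p.2 = 0 then delta p.1 else 0)

/-- The counit `ε : H → ℚ`, `ε(δ_∅) = 1` and `ε(δ_M) = 0` for `M ≇ ∅`
(evaluation at the class of the empty forest). -/
noncomputable def eps : H →ₗ[ℚ] ℚ := Finsupp.lapply 0

/-!
Record the admissible cuts of a forest `F` in the generating polynomial
`cutPoly F = ∑_C X^(P_C(F), R_C(F))` over the monoid of pairs of forest classes under `⊔`.
A cut of a disjoint union is a pair of cuts of the two parts, so `cutPoly` is multiplicative, and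
it depends only on the isomorphism class of `F`. Comparing coefficients in
`cutPoly (S ⊔ T) = cutPoly S * cutPoly T` gives
`n(A,B; S ⊔ T) = ∑ n(A₁,B₁; S) n(A₂,B₂; T)` over `A₁ ⊔ A₂ = A`, `B₁ ⊔ B₂ = B`,
which is the multiplicativity of `Δ` on basis vectors.

The coalgebra axioms only involve `⊔`: `Δ` is its transpose, `(Δ f)(S, T) = f(S ⊔ T)`, so
coassociativity, cocommutativity and the counit laws are associativity, commutativity and the unit
law of `⊔`. Finally `ε` is multiplicative because the only cut of the empty forest is empty.
-/

theorem forall₂_imp_of_mem {α β : Type*} {R S : α → β → Prop} {l₁ : List α} {l₂ : List β}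
    (h : ∀ a ∈ l₁, ∀ b, R a b → S a b) (h₁ : List.Forall₂ R l₁ l₂) : List.Forall₂ S l₁ l₂ :=
  ((List.forall₂_and_left _ _).mpr ⟨fun _ ha => ha, h₁⟩).imp fun a b hab => h a hab.1 b hab.2

theorem forall₂_trans_of_mem {α β γ : Type*} {R : α → β → Prop} {S : β → γ → Prop}
    {T : α → γ → Prop} {l₁ : List α} {l₂ : List β} {l₃ : List γ}
    (h : ∀ a ∈ l₁, ∀ b c, R a b → S b c → T a c) (h₁ : List.Forall₂ R l₁ l₂)
    (h₂ : List.Forall₂ S l₂ l₃) : List.Forall₂ T l₁ l₃ := by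
  induction h₁ generalizing l₃ with
  | nil => cases h₂; exact .nil
  | cons hab _ ih =>
    cases h₂ with
    | cons hbc h₂ =>
      simp only [List.mem_cons, forall_eq_or_imp] at h
      exact .cons (h.1 _ _ hab hbc) (ih h.2 h₂)

theorem sum_map_flatMap_eq_mul {α β γ R : Type*} [NonUnitalNonAssocSemiring R] (D : List α)
    (L : List β) (g : α → β → γ) (m : γ → R) (f₁ : α → R) (f₂ : β → R)
    (h : ∀ d c, m (g d c) = f₁ d * f₂ c) :
    ((D.flatMap fun d => L.map (g d)).map m).sum = (D.map f₁).sum * (L.map f₂).sum := by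
  induction D with
  | nil => simp
  | cons d D ih => simp [List.sum_append, ih, add_mul, Function.comp_def, h, List.sum_map_mul_left]

theorem le_and_tsub_eq_iff_add_eq {α : Type*} {A A₁ A₂ : Multiset α} :
    A₁ ≤ A ∧ A - A₁ = A₂ ↔ A₁ + A₂ = A := by
  constructor
  · rintro ⟨h, rfl⟩
    exact add_tsub_cancel_of_le h
  · rintro rfl
    exact ⟨le_self_add, add_tsub_cancel_left _ _⟩

theorem coeff_mul_eq_sum_powerset {R α β : Type*} [Semiring R]
    (x y : AddMonoidAlgebra R (Multiset α × Multiset β)) (A : Multiset α) (B : Multiset β) :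
    (x * y).coeff (A, B) = ∑ A₁ ∈ A.powerset.toFinset, ∑ B₁ ∈ B.powerset.toFinset,
      x.coeff (A₁, B₁) * y.coeff (A - A₁, B - B₁) := by
  rw [AddMonoidAlgebra.coeff_mul_antidiag x y (A, B)
    ((A.powerset.toFinset ×ˢ B.powerset.toFinset).image fun p => (p, (A - p.1, B - p.2))),
    Finset.sum_image (fun p _ q _ h => (Prod.mk.inj h).1), Finset.sum_product]
  rintro ⟨⟨A₁, B₁⟩, A₂, B₂⟩
  simp only [Finset.mem_image, Finset.mem_product, Multiset.mem_toFinset, Multiset.mem_powerset,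
    Prod.mk.injEq, Prod.mk_add_mk, ← le_and_tsub_eq_iff_add_eq]
  constructor
  · rintro ⟨_, ⟨hA, hB⟩, rfl, rfl, rfl⟩
    exact ⟨⟨hA, rfl⟩, hB, rfl⟩
  · rintro ⟨⟨hA, rfl⟩, hB, rfl⟩
    exact ⟨_, ⟨hA, hB⟩, rfl, rfl, rfl⟩

theorem coeff_sum_map_single_one {α M : Type*} (L : List α) (f : α → M) (x : M) :
    (L.map fun a => AddMonoidAlgebra.single (f a) (1 : ℚ)).sum.coeff x = L.countP (f · = x) := by
  induction L with
  | nil => simp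
  | cons a L ih =>
    by_cases h : f a = x <;> simp [ih, h, add_comm]

theorem lsum_toSpanSingleton_apply_of_eq_ite {α β : Type*} [DecidableEq α] (v : α → β →₀ ℚ)
    (φ : β → α) (hv : ∀ p x, v p x = if φ x = p then 1 else 0) (g : α →₀ ℚ) (x : β) :
    Finsupp.lsum ℚ (fun p => LinearMap.toSpanSingleton ℚ (β →₀ ℚ) (v p)) g x = g (φ x) := by
  simp only [Finsupp.lsum_apply, LinearMap.toSpanSingleton_apply, Finsupp.sum_apply,
    Finsupp.smul_apply, hv, smul_eq_mul, mul_ite, mul_one, mul_zero, Finsupp.sum_ite_self_eq]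

section BilinOfBasis

variable {ι κ V : Type*} [AddCommMonoid V] [Module ℚ V]

noncomputable def bilinOfBasis (Φ : ι → κ → V) : (ι →₀ ℚ) →ₗ[ℚ] (κ →₀ ℚ) →ₗ[ℚ] V :=
  Finsupp.lsum ℚ fun A => LinearMap.toSpanSingleton ℚ _ <|
    Finsupp.lsum ℚ fun B => LinearMap.toSpanSingleton ℚ V (Φ A B)

theorem bilinOfBasis_apply (Φ : ι → κ → V) (f : ι →₀ ℚ) (g : κ →₀ ℚ) :
    bilinOfBasis Φ f g = f.sum fun A a => g.sum fun B b => (a * b) • Φ A B := by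
  simp [bilinOfBasis, Finsupp.lsum_apply, Finsupp.smul_sum, mul_smul]

theorem bilinOfBasis_single (Φ : ι → κ → V) (A : ι) (B : κ) :
    bilinOfBasis Φ (Finsupp.single A 1) (Finsupp.single B 1) = Φ A B := by
  simp [bilinOfBasis]

end BilinOfBasis

theorem Iso.refl : ∀ t : RTree, Iso t t
  | .node l => .node (List.forall₂_same.mpr fun x _ => Iso.refl x) (.refl l)

theorem Iso.symm : ∀ {t u : RTree}, Iso t u → Iso u t
  | .node _, .node _, .node hf hp => by
    obtain ⟨w, hw, hwp⟩ := List.perm_comp_forall₂ hp.symm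
      (forall₂_imp_of_mem (S := flip Iso) (fun _ _ _ h => Iso.symm h) hf).flip
    exact .node hw hwp

theorem Iso.trans : ∀ {t u v : RTree}, Iso t u → Iso u v → Iso t v
  | .node l₁, .node _, .node _, .node hf hp, .node hg hq => by
    obtain ⟨w, hw, hwp⟩ := List.perm_comp_forall₂ hp hg
    exact .node (forall₂_trans_of_mem (R := Iso) (S := Iso)
      (fun a _ _ _ h h' => Iso.trans h h') hf hw)
      (hwp.trans hq)

theorem iso_equivalence : Equivalence Iso := ⟨Iso.refl, Iso.symm, Iso.trans⟩

theorem clT_eq_iff {t u : RTree} : clT t = clT u ↔ Iso t u :=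
  Quot.eq.trans iso_equivalence.eqvGen_iff

theorem clF_nil : clF [] = 0 := rfl

theorem clF_cons (t : RTree) (F : List RTree) : clF (t :: F) = clT t ::ₘ clF F := rfl

theorem clF_append (F G : List RTree) : clF (F ++ G) = clF F + clF G := by
  simp [clF]

theorem clF_repF (M : ForestClass) : clF (repF M) = M := by
  simp only [clF, repF, List.map_map]
  conv_rhs => rw [← Multiset.coe_toList M]
  exact congrArg _ ((List.map_congr_left fun q _ => Quot.out_eq q).trans (List.map_id _))

theorem clT_node_eq_of_clF_eq {F G : List RTree} (h : clF F = clF G) :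
    clT (.node F) = clT (.node G) := by
  have hperm : (F.map clT).Perm (G.map clT) := Multiset.coe_eq_coe.mp h
  obtain ⟨G', hF, hG⟩ := List.perm_comp_forall₂ hperm
    (r := fun q t => q = clT t)
    (List.forall₂_map_left_iff.mpr (List.forall₂_same.mpr fun t _ => rfl))
  exact Quot.sound (.node ((List.forall₂_map_left_iff.mp hF).imp fun _ _ h => clT_eq_iff.mp h) hG)

theorem eq_of_iso {β : Type*} (f : RTree → β)
    (hf : ∀ l₁ l₂, clT (.node l₁) = clT (.node l₂) →
      (l₁.map f : Multiset β) = l₂.map f → f (.node l₁) = f (.node l₂)) :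
    ∀ {t u : RTree}, Iso t u → f t = f u
  | .node l₁, .node _, h@(.node (l := l) hl hp) => by
    have hmap : l₁.map f = l.map f := by
      rw [← List.forall₂_eq_eq_eq, List.forall₂_map_left_iff, List.forall₂_map_right_iff]
      exact forall₂_imp_of_mem (fun _ _ _ h => eq_of_iso f hf h) hl
    exact hf _ _ (Quot.sound h) (by rw [hmap]; exact Multiset.coe_eq_coe.mpr (hp.map f))

theorem coe_map_eq_of_clF_eq {β : Type*} {f : RTree → β} (hf : ∀ t u, Iso t u → f t = f u)
    {F G : List RTree} (h : clF F = clF G) : (F.map f : Multiset β) = G.map f := by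
  have key : ∀ F : List RTree, (F.map f : Multiset β) = (clF F).map (Quot.lift f hf) := by
    intro F
    simp [clF, List.map_map, Function.comp_def, clT]
  rw [key, key, h]

theorem sizeL_cons_node (l ts : List RTree) :
    sizeL (.node l :: ts) = 1 + sizeL l + sizeL ts := by
  rw [sizeL]

theorem sizeL_cons (t : RTree) (ts : List RTree) : sizeL (t :: ts) = sizeL [t] + sizeL ts := by
  cases t
  simp only [sizeL_cons_node, sizeL]
  omega

theorem sizeL_append (F G : List RTree) : sizeL (F ++ G) = sizeL F + sizeL G := by
  induction F with
  | nil => simp [sizeL]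
  | cons t ts ih => rw [List.cons_append, sizeL_cons, ih, sizeL_cons t ts]; omega

theorem sizeL_eq_sum (F : List RTree) : sizeL F = (F.map fun t => sizeL [t]).sum := by
  induction F with
  | nil => simp [sizeL]
  | cons t ts ih => rw [sizeL_cons, ih, List.map_cons, List.sum_cons]

theorem sizeL_eq_of_clF_eq {F G : List RTree} (h : clF F = clF G) : sizeL F = sizeL G := by
  have hiso : ∀ t u, Iso t u → sizeL [t] = sizeL [u] :=
    fun _ _ => eq_of_iso (fun t => sizeL [t]) fun l₁ l₂ _ hl => by
      rw [sizeL_cons_node, sizeL_cons_node, sizeL_eq_sum l₁, sizeL_eq_sum l₂, ← Multiset.sum_coe,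
        ← Multiset.sum_coe, hl]
  rw [sizeL_eq_sum, sizeL_eq_sum, ← Multiset.sum_coe, ← Multiset.sum_coe,
    coe_map_eq_of_clF_eq hiso h]

theorem sizeC_clF (F : List RTree) : sizeC (clF F) = sizeL F :=
  sizeL_eq_of_clF_eq (clF_repF _)

theorem exists_mem_forestsUpTo :
    ∀ (n : ℕ) (F : List RTree), sizeL F ≤ n → ∃ F' ∈ forestsUpTo n, clF F' = clF F
  | _, [], _ => ⟨[], by cases ‹ℕ› <;> simp [forestsUpTo], rfl⟩
  | 0, .node l :: ts, h => by rw [sizeL_cons_node] at h; omega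
  | n + 1, .node l :: ts, h => by
    rw [sizeL_cons_node] at h
    obtain ⟨l', hl', hl⟩ := exists_mem_forestsUpTo n l (by omega)
    obtain ⟨ts', hts', hts⟩ := exists_mem_forestsUpTo n ts (by omega)
    refine ⟨.node l' :: ts', ?_, by rw [clF_cons, clF_cons, hts, clT_node_eq_of_clF_eq hl]⟩
    simp only [forestsUpTo, List.mem_cons, List.mem_flatMap, List.mem_map]
    exact .inr ⟨l', hl', ts', hts', rfl⟩

theorem mem_forestCand {M : ForestClass} {n : ℕ} (h : sizeC M ≤ n) : M ∈ forestCand n := by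
  obtain ⟨F', hF', hcl⟩ := exists_mem_forestsUpTo n (repF M) h
  simp only [forestCand, List.mem_toFinset, List.mem_map]
  exact ⟨F', hF', hcl.trans (clF_repF M)⟩

theorem sizeL_Pcut_add_sizeL_Rcut :
    ∀ (F : List RTree), ∀ c ∈ cutsF F, sizeL (Pcut F c) + sizeL (Rcut F c) = sizeL F
  | [], c, hc => by simp_all [cutsF, Pcut, Rcut, sizeL]
  | .node l :: ts, _, hc => by
    simp only [cutsF, List.mem_flatMap, List.mem_map, List.mem_cons] at hc
    obtain ⟨_, hd | ⟨ds, hds, rfl⟩, cs, hcs, rfl⟩ := hc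
    · have := sizeL_Pcut_add_sizeL_Rcut ts cs hcs
      simp only [hd, Pcut, Rcut, sizeL_cons_node]
      omega
    · have := sizeL_Pcut_add_sizeL_Rcut ts cs hcs
      have := sizeL_Pcut_add_sizeL_Rcut l ds hds
      simp only [Pcut, Rcut, sizeL_cons_node, sizeL_append]
      omega

theorem Pcut_cons_cons (t : RTree) (ts : List RTree) (d : CutShape) (cs : List CutShape) :
    Pcut (t :: ts) (d :: cs) = Pcut [t] [d] ++ Pcut ts cs := by
  obtain ⟨l⟩ := t
  cases d <;> simp [Pcut]

theorem Rcut_cons_cons (t : RTree) (ts : List RTree) (d : CutShape) (cs : List CutShape) :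
    Rcut (t :: ts) (d :: cs) = Rcut [t] [d] ++ Rcut ts cs := by
  obtain ⟨l⟩ := t
  cases d <;> simp [Rcut]

noncomputable def cutPoly (F : List RTree) : AddMonoidAlgebra ℚ (ForestClass × ForestClass) :=
  ((cutsF F).map fun c => .single (clF (Pcut F c), clF (Rcut F c)) 1).sum

theorem cutPoly_nil : cutPoly [] = 1 := by
  simp [cutPoly, cutsF, Pcut, Rcut, AddMonoidAlgebra.one_def]
  rfl

theorem cutPoly_cons (t : RTree) (ts : List RTree) :
    cutPoly (t :: ts) = cutPoly [t] * cutPoly ts := by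
  obtain ⟨l⟩ := t
  have hsplit : ∀ ts : List RTree, cutPoly (.node l :: ts) =
      ((CutShape.full :: (cutsF l).map .branch).map fun d =>
        AddMonoidAlgebra.single (clF (Pcut [.node l] [d]), clF (Rcut [.node l] [d])) (1 : ℚ)).sum *
        cutPoly ts := fun ts => by
    rw [cutPoly, cutsF]
    exact sum_map_flatMap_eq_mul _ _ _ _ _ _ fun d cs => by
      rw [Pcut_cons_cons, Rcut_cons_cons, clF_append, clF_append,
        AddMonoidAlgebra.single_mul_single, mul_one, Prod.mk_add_mk]
  rw [hsplit, hsplit, cutPoly_nil, mul_one]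

theorem cutPoly_append (F G : List RTree) : cutPoly (F ++ G) = cutPoly F * cutPoly G := by
  induction F with
  | nil => rw [List.nil_append, cutPoly_nil, one_mul]
  | cons t F ih => rw [List.cons_append, cutPoly_cons, ih, cutPoly_cons t F, mul_assoc]

theorem cutPoly_eq_prod (F : List RTree) :
    cutPoly F = ((F.map fun t => cutPoly [t] : List _) : Multiset _).prod := by
  induction F with
  | nil => rw [cutPoly_nil]; rfl
  | cons t F ih => rw [cutPoly_cons, ih, List.map_cons, Multiset.prod_coe, Multiset.prod_coe,
      List.prod_cons]

noncomputable def bPlus (M : ForestClass) : TreeClass := clT (.node (repF M))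

theorem bPlus_clF (F : List RTree) : bPlus (clF F) = clT (.node F) :=
  clT_node_eq_of_clF_eq (clF_repF _)

theorem cutPoly_node (l : List RTree) :
    cutPoly [.node l] = .single (clF [.node l], 0) 1 +
      (cutPoly l).mapDomain fun p => (p.1, {bPlus p.2}) := by
  have hcuts : cutsF [.node l] = (CutShape.full :: (cutsF l).map .branch).map ([·]) := by
    rw [cutsF, cutsF]
    induction cutsF l <;> simp_all
  have hgraft : ∀ L : List (List CutShape),
      AddMonoidAlgebra.mapDomain (fun p => (p.1, ({bPlus p.2} : ForestClass)))
        (L.map fun c => .single (clF (Pcut l c), clF (Rcut l c)) (1 : ℚ)).sum =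
      (L.map fun c => .single (clF (Pcut l c), {clT (.node (Rcut l c))}) 1).sum := by
    intro L
    induction L with
    | nil => simp
    | cons c L ih => simp [AddMonoidAlgebra.mapDomain_add, ih, bPlus_clF]
  simp only [cutPoly]
  rw [hgraft, hcuts]
  simp [Pcut, Rcut, clF_cons, clF_nil, Function.comp_def]

theorem cutPoly_eq_of_clF_eq {F G : List RTree} (h : clF F = clF G) : cutPoly F = cutPoly G := by
  have hiso : ∀ t u, Iso t u → cutPoly [t] = cutPoly [u] :=
    fun _ _ => eq_of_iso (fun t => cutPoly [t]) fun l₁ l₂ hcl hl => by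
      rw [cutPoly_node, cutPoly_node, cutPoly_eq_prod l₁, cutPoly_eq_prod l₂, hl, clF_cons,
        clF_cons, hcl]
  rw [cutPoly_eq_prod, cutPoly_eq_prod, coe_map_eq_of_clF_eq hiso h]

theorem nCuts_eq_coeff_cutPoly (A B M : ForestClass) :
    (nCuts A B M : ℚ) = (cutPoly (repF M)).coeff (A, B) := by
  simp [nCuts, cutPoly, coeff_sum_map_single_one]

theorem nCuts_add (A B S T : ForestClass) :
    (nCuts A B (S + T) : ℚ) = ∑ A₁ ∈ A.powerset.toFinset, ∑ B₁ ∈ B.powerset.toFinset,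
      (nCuts A₁ B₁ S : ℚ) * nCuts (A - A₁) (B - B₁) T := by
  have hmul : cutPoly (repF (S + T)) = cutPoly (repF S) * cutPoly (repF T) := by
    rw [← cutPoly_append]
    exact cutPoly_eq_of_clF_eq (by rw [clF_append, clF_repF, clF_repF, clF_repF])
  simp only [nCuts_eq_coeff_cutPoly, hmul, coeff_mul_eq_sum_powerset]

theorem nCuts_zero (A B : ForestClass) : nCuts A B 0 = if A = 0 ∧ B = 0 then 1 else 0 := by
  have hrep : repF 0 = [] := by simp [repF]
  simp only [nCuts, hrep, cutsF, Pcut, Rcut, clF_nil, List.countP_singleton,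
    decide_eq_true_eq, eq_comm (a := (0 : ForestClass))]

theorem mem_forestCand_of_nCuts_ne_zero {A B M : ForestClass} (h : nCuts A B M ≠ 0) :
    M ∈ forestCand (sizeC A + sizeC B) := by
  obtain ⟨c, hc, hcut⟩ := List.countP_pos_iff.mp (Nat.pos_of_ne_zero h)
  simp only [decide_eq_true_eq] at hcut
  refine mem_forestCand (le_of_eq ?_)
  rw [← hcut.1, ← hcut.2, sizeC_clF, sizeC_clF, sizeL_Pcut_add_sizeL_Rcut _ c hc, sizeC]

theorem ite_mem_forestCand_nCuts (A B M : ForestClass) :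
    (if M ∈ forestCand (sizeC A + sizeC B) then (nCuts A B M : ℚ) else 0) = nCuts A B M := by
  split_ifs with h
  · rfl
  · exact_mod_cast (not_imp_comm.mp mem_forestCand_of_nCuts_ne_zero h).symm

theorem deltaBasis_apply (M S T : ForestClass) :
    deltaBasis M (S, T) = if S + T = M then 1 else 0 := by
  simp only [deltaBasis, Finsupp.finsetSum_apply, Finsupp.single_apply, Prod.mk.injEq, ite_and,
    Finset.sum_ite_eq', Multiset.mem_toFinset, Multiset.mem_powerset]
  simp only [← ite_and, le_and_tsub_eq_iff_add_eq]

theorem coprod_apply (f : H) (S T : ForestClass) : coprod f (S, T) = f (S + T) :=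
  lsum_toSpanSingleton_apply_of_eq_ite deltaBasis (fun p => p.1 + p.2)
    (fun M q => deltaBasis_apply M q.1 q.2) f (S, T)

theorem coprodFst_apply (g : H2) (X Y Z : ForestClass) : coprodFst g (X, Y, Z) = g (X + Y, Z) := by
  refine lsum_toSpanSingleton_apply_of_eq_ite _ (fun q => (q.1 + q.2.1, q.2.2))
    (fun p ⟨A, B, C⟩ => ?_) g (X, Y, Z)
  simp only [Finsupp.finsetSum_apply, Finsupp.single_apply, Prod.mk.injEq, ite_and,
    Finset.sum_ite_eq', Multiset.mem_toFinset, Multiset.mem_powerset]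
  simp only [← ite_and, ← and_assoc, le_and_tsub_eq_iff_add_eq, Prod.ext_iff, eq_comm (a := C)]

theorem coprodSnd_apply (g : H2) (X Y Z : ForestClass) : coprodSnd g (X, Y, Z) = g (X, Y + Z) := by
  refine lsum_toSpanSingleton_apply_of_eq_ite _ (fun q => (q.1, q.2.1 + q.2.2))
    (fun p ⟨A, B, C⟩ => ?_) g (X, Y, Z)
  simp only [Finsupp.finsetSum_apply, Finsupp.single_apply, Prod.mk.injEq, ite_and,
    Finset.sum_ite_irrel, Finset.sum_const_zero, Finset.sum_ite_eq', Multiset.mem_toFinset,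
    Multiset.mem_powerset]
  simp only [← ite_and, le_and_tsub_eq_iff_add_eq, Prod.ext_iff, eq_comm (a := A)]

theorem counitFst_apply (g : H2) (M : ForestClass) : counitFst g M = g (0, M) := by
  refine lsum_toSpanSingleton_apply_of_eq_ite _ (fun N => (0, N)) (fun p N => ?_) g M
  by_cases h : p.1 = 0 <;> simp [h, delta, Finsupp.single_apply, Prod.ext_iff, eq_comm]

theorem counitSnd_apply (g : H2) (M : ForestClass) : counitSnd g M = g (M, 0) := by
  refine lsum_toSpanSingleton_apply_of_eq_ite _ (fun N => (N, 0)) (fun p N => ?_) g M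
  by_cases h : p.2 = 0 <;> simp [h, delta, Finsupp.single_apply, Prod.ext_iff, eq_comm]

theorem coprodFst_coprod (f : H) : coprodFst (coprod f) = coprodSnd (coprod f) := by
  ext ⟨X, Y, Z⟩
  simp only [coprodFst_apply, coprodSnd_apply, coprod_apply, add_assoc]

theorem mapDomain_swap_coprod (f : H) : Finsupp.mapDomain Prod.swap (coprod f) = coprod f := by
  ext ⟨S, T⟩
  change Finsupp.mapDomain Prod.swap (coprod f) (Prod.swap (T, S)) = coprod f (S, T)
  rw [Finsupp.mapDomain_apply Prod.swap_injective, coprod_apply, coprod_apply, add_comm]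

theorem counitFst_coprod (f : H) : counitFst (coprod f) = f := by
  ext M
  rw [counitFst_apply, coprod_apply, zero_add]

theorem counitSnd_coprod (f : H) : counitSnd (coprod f) = f := by
  ext M
  rw [counitSnd_apply, coprod_apply, add_zero]

theorem coprod_delta (M : ForestClass) : coprod (delta M) = deltaBasis M := by
  simp [coprod, delta]

theorem coprod_delta_zero : coprod (delta 0) = Finsupp.single (0, 0) 1 := by
  simp [coprod_delta, deltaBasis]

theorem hmul_eq_bilinOfBasis (f g : H) : hmul f g = bilinOfBasis mulBasis f g :=
  (bilinOfBasis_apply mulBasis f g).symm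

theorem hmul2_eq_bilinOfBasis (f g : H2) : hmul2 f g = bilinOfBasis mulBasis2 f g :=
  (bilinOfBasis_apply mulBasis2 f g).symm

theorem mulBasis_apply (A B M : ForestClass) : mulBasis A B M = nCuts A B M := by
  simp only [mulBasis, delta, Finsupp.finsetSum_apply, Finsupp.smul_apply, Finsupp.single_apply,
    smul_eq_mul, mul_ite, mul_one, mul_zero, Finset.sum_ite_eq', ite_mem_forestCand_nCuts]

theorem mulBasis2_apply (P Q : ForestClass × ForestClass) (S T : ForestClass) :
    mulBasis2 P Q (S, T) = nCuts P.1 Q.1 S * nCuts P.2 Q.2 T := by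
  simp only [mulBasis2, Finsupp.finsetSum_apply, Finsupp.smul_apply, Finsupp.single_apply,
    Prod.mk.injEq, ite_and, smul_eq_mul, mul_ite, mul_one, mul_zero, Finset.sum_ite_irrel,
    Finset.sum_const_zero, Finset.sum_ite_eq']
  conv_rhs => rw [← ite_mem_forestCand_nCuts P.1 Q.1 S, ← ite_mem_forestCand_nCuts P.2 Q.2 T]
  split_ifs <;> simp

theorem coprod_mulBasis (A B : ForestClass) :
    coprod (mulBasis A B) = hmul2 (coprod (delta A)) (coprod (delta B)) := by
  ext ⟨S, T⟩
  simp only [coprod_apply, mulBasis_apply, nCuts_add, hmul2_eq_bilinOfBasis, coprod_delta,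
    deltaBasis, map_sum, LinearMap.sum_apply, bilinOfBasis_single, Finsupp.finsetSum_apply,
    mulBasis2_apply]
  exact Finset.sum_comm

theorem eps_mulBasis (A B : ForestClass) : eps (mulBasis A B) = eps (delta A) * eps (delta B) := by
  by_cases hA : A = 0 <;> by_cases hB : B = 0 <;>
    simp [eps, mulBasis_apply, nCuts_zero, delta, hA, hB, eq_comm (b := A)]

theorem coprod_hmul (f g : H) : coprod (hmul f g) = hmul2 (coprod f) (coprod g) := by
  have h : (bilinOfBasis mulBasis).compr₂ coprod =
      ((bilinOfBasis mulBasis2).comp coprod).compl₂ coprod := by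
    ext A B : 4
    simpa [delta, bilinOfBasis_single, hmul2_eq_bilinOfBasis] using coprod_mulBasis A B
  simpa [hmul_eq_bilinOfBasis, hmul2_eq_bilinOfBasis] using LinearMap.congr_fun₂ h f g

theorem eps_hmul (f g : H) : eps (hmul f g) = eps f * eps g := by
  have h : (bilinOfBasis mulBasis).compr₂ eps = (LinearMap.mul ℚ ℚ).compl₁₂ eps eps := by
    ext A B
    simpa [delta, bilinOfBasis_single] using eps_mulBasis A B
  simpa [hmul_eq_bilinOfBasis] using LinearMap.congr_fun₂ h f g

/-- `Δ` is coassociative and cocommutative, `ε` is a counit for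
`Δ`, and both `Δ` and `ε` are homomorphisms of unital ℚ-algebras (`H ⊗ H`
carrying the product induced by the Hall product).  Hence
`(H, ×, δ_∅, Δ, ε)` is a cocommutative bialgebra over ℚ. -/
theorem hall_bialgebra :
    -- coassociativity
    (∀ f : H, coprodFst (coprod f) = coprodSnd (coprod f)) ∧
    -- cocommutativity
    (∀ f : H, Finsupp.mapDomain Prod.swap (coprod f) = coprod f) ∧
    -- counit axioms
    (∀ f : H, counitFst (coprod f) = f) ∧
    (∀ f : H, counitSnd (coprod f) = f) ∧
    -- Δ is a homomorphism of unital ℚ-algebras (it is linear by construction)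
    (∀ f g : H, coprod (hmul f g) = hmul2 (coprod f) (coprod g)) ∧
    (coprod (delta 0) = Finsupp.single (0, 0) 1) ∧
    -- ε is a homomorphism of unital ℚ-algebras
    (∀ f g : H, eps (hmul f g) = eps f * eps g) ∧
    (eps (delta 0) = 1) :=
  ⟨coprodFst_coprod, mapDomain_swap_coprod, counitFst_coprod, counitSnd_coprod, coprod_hmul,
    coprod_delta_zero, eps_hmul, by simp [eps, delta]⟩

end CK
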